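/- Let k be a field of characteristic 3 properly containing F_3, and let ϑ ∈ k \ F_3. In R = k[s,t,u,v]/(s², sv, t², tv, u², uv, v² − st − su), the element (1 − ϑ)s + ϑt + u + v is an exact zero divisor. -/

import Mathlib

/-!
`R` has `k`-basis `1, s, t, u, v, st, su, tu` and `m³ = 0`, so it is isomorphic to an explicit
coordinate ring, in which annihilators are solutions of small linear systems. Write
`x = (1 - ϑ)s + ϑt + u + v` and `w = -(1 + ϑ)s - ϑt + u - ϑv`; then `xw = -3ϑ(st + su) = 0`.
If `xy = 0`, then `y` has no constant term and its linear part is a multiple of that of `w`, so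
`y ∈ kw + m²`; and `m² ⊆ (w)` because `ws, wt, wv` span `m²` as soon as `ϑ ≠ 0, -1`. Hence
`ann x = (w)`, and symmetrically `ann w = (x)` using `ϑ ≠ 1`. These are exactly the conditions
`ϑ ∉ 𝔽₃`.
-/

universe u

open MvPolynomial

set_option synthInstance.maxHeartbeats 1000000
set_option maxHeartbeats 1000000

/-- The defining ideal of `R = k[s,t,u,v]/(s², sv, t², tv, u², uv, v² - st - su)`. -/
noncomputable def I14 (k : Type u) [CommRing k] : Ideal (MvPolynomial (Fin 4) k) :=
  Ideal.span {X 0 ^ 2, X 0 * X 3, X 1 ^ 2, X 1 * X 3, X 2 ^ 2, X 2 * X 3,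
    X 3 ^ 2 - X 0 * X 1 - X 0 * X 2}

/-- The ring `R = k[s,t,u,v]/(s², sv, t², tv, u², uv, v² - st - su)`. -/
abbrev R14 (k : Type u) [CommRing k] : Type u := MvPolynomial (Fin 4) k ⧸ I14 k

/-- The annihilator of an element of `R` as an ideal. -/
def annIdeal (R : Type u) [CommRing R] (a : R) : Ideal R :=
  LinearMap.ker (LinearMap.mulLeft R a)

/-- `x` is an exact zero divisor. -/
def IsExactZeroDivisor (R : Type u) [CommRing R] (x : R) : Prop :=
  x ≠ 0 ∧ ¬ IsUnit x ∧
    ∃ w, annIdeal R x = Ideal.span {w} ∧ annIdeal R w = Ideal.span {x}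

section ExactZeroDivisor

variable {R S : Type*} [CommRing R] [CommRing S]

theorem mem_annIdeal_iff {a y : R} : y ∈ annIdeal R a ↔ a * y = 0 := Iff.rfl

theorem annIdeal_eq_span_singleton {x w : R} (hxw : x * w = 0)
    (h : ∀ y, x * y = 0 → y ∈ Ideal.span {w}) : annIdeal R x = Ideal.span {w} := by
  refine le_antisymm (fun y hy ↦ h y hy) ?_
  rw [Ideal.span_le, Set.singleton_subset_iff]
  exact hxw

theorem annIdeal_comap (e : R ≃+* S) (a : R) : (annIdeal S (e a)).comap e = annIdeal R a := by
  ext y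
  simp [mem_annIdeal_iff, ← map_mul]

theorem span_singleton_comap (e : R ≃+* S) (b : R) :
    (Ideal.span {e b}).comap e = Ideal.span {b} := by
  rw [← Ideal.map_symm, Ideal.map_span, Set.image_singleton, RingEquiv.symm_apply_apply]

theorem IsExactZeroDivisor.of_ringEquiv (e : R ≃+* S) {x : R}
    (h : IsExactZeroDivisor S (e x)) : IsExactZeroDivisor R x := by
  obtain ⟨hx0, hxu, w, hxw, hwx⟩ := h
  obtain ⟨w, rfl⟩ := e.surjective w
  refine ⟨fun h ↦ hx0 (by simp [h]), fun h ↦ hxu (h.map e), w, ?_, ?_⟩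
  · rw [← annIdeal_comap e, hxw, span_singleton_comap]
  · rw [← annIdeal_comap e, hwx, span_singleton_comap]

end ExactZeroDivisor

/-- Coordinates of an element of `R14 k` in its basis `1, s, t, u, v, st, su, tu`; the product
is that of `R14 k`, computed with `v² = st + su` and `m³ = 0`. -/
@[ext] structure R14Model (k : Type u) where
  c1 : k
  cs : k
  ct : k
  cu : k
  cv : k
  cst : k
  csu : k
  ctu : k

namespace R14Model

section CommRing

variable {k : Type u} [CommRing k]

@[simps] instance : Zero (R14Model k) := ⟨⟨0, 0, 0, 0, 0, 0, 0, 0⟩⟩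

@[simps] instance : One (R14Model k) := ⟨⟨1, 0, 0, 0, 0, 0, 0, 0⟩⟩

@[simps] instance : Add (R14Model k) :=
  ⟨fun x y ↦ ⟨x.c1 + y.c1, x.cs + y.cs, x.ct + y.ct, x.cu + y.cu, x.cv + y.cv,
    x.cst + y.cst, x.csu + y.csu, x.ctu + y.ctu⟩⟩

@[simps] instance : Neg (R14Model k) :=
  ⟨fun x ↦ ⟨-x.c1, -x.cs, -x.ct, -x.cu, -x.cv, -x.cst, -x.csu, -x.ctu⟩⟩

@[simps] instance : Sub (R14Model k) :=
  ⟨fun x y ↦ ⟨x.c1 - y.c1, x.cs - y.cs, x.ct - y.ct, x.cu - y.cu, x.cv - y.cv,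
    x.cst - y.cst, x.csu - y.csu, x.ctu - y.ctu⟩⟩

@[simps] instance : Mul (R14Model k) :=
  ⟨fun x y ↦
    ⟨x.c1 * y.c1,
     x.c1 * y.cs + x.cs * y.c1,
     x.c1 * y.ct + x.ct * y.c1,
     x.c1 * y.cu + x.cu * y.c1,
     x.c1 * y.cv + x.cv * y.c1,
     x.c1 * y.cst + x.cst * y.c1 + x.cs * y.ct + x.ct * y.cs + x.cv * y.cv,
     x.c1 * y.csu + x.csu * y.c1 + x.cs * y.cu + x.cu * y.cs + x.cv * y.cv,
     x.c1 * y.ctu + x.ctu * y.c1 + x.ct * y.cu + x.cu * y.ct⟩⟩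

instance : CommRing (R14Model k) where
  add_assoc _ _ _ := by ext <;> simp <;> ring
  zero_add _ := by ext <;> simp
  add_zero _ := by ext <;> simp
  add_comm _ _ := by ext <;> simp <;> ring
  neg_add_cancel _ := by ext <;> simp
  sub_eq_add_neg _ _ := by ext <;> simp [sub_eq_add_neg]
  mul_assoc _ _ _ := by ext <;> simp <;> ring
  one_mul _ := by ext <;> simp
  mul_one _ := by ext <;> simp
  zero_mul _ := by ext <;> simp
  mul_zero _ := by ext <;> simp
  left_distrib _ _ _ := by ext <;> simp <;> ring
  right_distrib _ _ _ := by ext <;> simp <;> ring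
  mul_comm _ _ := by ext <;> simp <;> ring
  nsmul := nsmulRec
  zsmul := zsmulRec

@[simps] def ofScalar : k →+* R14Model k where
  toFun a := ⟨a, 0, 0, 0, 0, 0, 0, 0⟩
  map_one' := rfl
  map_mul' _ _ := by ext <;> simp
  map_zero' := rfl
  map_add' _ _ := by ext <;> simp

def gen : Fin 4 → R14Model k :=
  ![⟨0, 1, 0, 0, 0, 0, 0, 0⟩, ⟨0, 0, 1, 0, 0, 0, 0, 0⟩, ⟨0, 0, 0, 1, 0, 0, 0, 0⟩,
    ⟨0, 0, 0, 0, 1, 0, 0, 0⟩]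

end CommRing

section Iso

variable {k : Type u} [CommRing k]

local notation "mk" => Ideal.Quotient.mk (I14 k)

theorem I14_le_ker_eval₂Hom : I14 k ≤ RingHom.ker (eval₂Hom (ofScalar (k := k)) gen) := by
  simp only [I14, Ideal.span_le, Set.insert_subset_iff, Set.singleton_subset_iff]
  refine ⟨?_, ?_, ?_, ?_, ?_, ?_, ?_⟩ <;> ext <;> simp [gen, pow_two]

noncomputable def toModel : R14 k →+* R14Model k :=
  Ideal.Quotient.lift _ _ I14_le_ker_eval₂Hom

@[simp] theorem toModel_mk (p : MvPolynomial (Fin 4) k) :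
    toModel (mk p) = eval₂Hom (ofScalar (k := k)) gen p := rfl

noncomputable def ofModel (a : R14Model k) : R14 k :=
  mk (C a.c1 + C a.cs * X 0 + C a.ct * X 1 + C a.cu * X 2 + C a.cv * X 3 +
    C a.cst * (X 0 * X 1) + C a.csu * (X 0 * X 2) + C a.ctu * (X 1 * X 2))

theorem toModel_ofModel (a : R14Model k) : toModel (ofModel a) = a := by
  ext <;> simp [ofModel, gen]

theorem ofModel_add (a b : R14Model k) : ofModel (a + b) = ofModel a + ofModel b := by
  simp only [ofModel, ← map_add]
  congr 1
  simp only [add_c1, add_cs, add_ct, add_cu, add_cv, add_cst, add_csu, add_ctu, map_add]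
  ring

theorem mk_eq_zero_of_mem_generators {p : MvPolynomial (Fin 4) k}
    (hp : p ∈ ({X 0 ^ 2, X 0 * X 3, X 1 ^ 2, X 1 * X 3, X 2 ^ 2, X 2 * X 3,
      X 3 ^ 2 - X 0 * X 1 - X 0 * X 2} : Set (MvPolynomial (Fin 4) k))) : mk p = 0 :=
  Ideal.Quotient.eq_zero_iff_mem.mpr (Ideal.subset_span hp)

theorem ofModel_mul_gen (a : R14Model k) (i : Fin 4) :
    ofModel (a * gen i) = ofModel a * mk (X i) := by
  have hss : mk (X 0) ^ 2 = 0 := by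
    rw [← map_pow]; exact mk_eq_zero_of_mem_generators (by simp)
  have hsv : mk (X 0) * mk (X 3) = 0 := by
    rw [← map_mul]; exact mk_eq_zero_of_mem_generators (by simp)
  have htt : mk (X 1) ^ 2 = 0 := by
    rw [← map_pow]; exact mk_eq_zero_of_mem_generators (by simp)
  have htv : mk (X 1) * mk (X 3) = 0 := by
    rw [← map_mul]; exact mk_eq_zero_of_mem_generators (by simp)
  have huu : mk (X 2) ^ 2 = 0 := by
    rw [← map_pow]; exact mk_eq_zero_of_mem_generators (by simp)
  have huv : mk (X 2) * mk (X 3) = 0 := by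
    rw [← map_mul]; exact mk_eq_zero_of_mem_generators (by simp)
  have hvv : mk (X 3) ^ 2 - mk (X 0) * mk (X 1) - mk (X 0) * mk (X 2) = 0 := by
    simp only [← map_pow, ← map_mul, ← map_sub]; exact mk_eq_zero_of_mem_generators (by simp)
  have hstu : mk (X 0) * mk (X 1) * mk (X 2) = 0 := by
    linear_combination mk (X 3) * huv - mk (X 0) * huu - mk (X 2) * hvv
  fin_cases i <;> simp [ofModel, gen]
  · linear_combination -(mk (C a.cs) + mk (C a.cst) * mk (X 1) + mk (C a.csu) * mk (X 2)) * hss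
      - mk (C a.cv) * hsv - mk (C a.ctu) * hstu
  · linear_combination -(mk (C a.ct) + mk (C a.cst) * mk (X 0) + mk (C a.ctu) * mk (X 2)) * htt
      - mk (C a.cv) * htv - mk (C a.csu) * hstu
  · linear_combination -(mk (C a.cu) + mk (C a.csu) * mk (X 0) + mk (C a.ctu) * mk (X 1)) * huu
      - mk (C a.cv) * huv - mk (C a.cst) * hstu
  · linear_combination -mk (C a.cv) * hvv
      - (mk (C a.cs) + mk (C a.cst) * mk (X 1) + mk (C a.csu) * mk (X 2)) * hsv
      - (mk (C a.ct) + mk (C a.ctu) * mk (X 2)) * htv - mk (C a.cu) * huv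

theorem ofModel_toModel (y : R14 k) : ofModel (toModel y) = y := by
  obtain ⟨p, rfl⟩ := Ideal.Quotient.mk_surjective y
  induction p using MvPolynomial.induction_on with
  | C a => simp [ofModel]
  | add p q hp hq => rw [map_add, map_add, ofModel_add, hp, hq]
  | mul_X p i hp =>
    have hX : toModel (mk (X i)) = gen i := by simp
    rw [map_mul, map_mul, hX, ofModel_mul_gen, hp]

noncomputable def equiv : R14 k ≃+* R14Model k :=
  { toModel with
    invFun := ofModel
    left_inv := ofModel_toModel
    right_inv := toModel_ofModel }

end Iso

section Quadratic

variable {k : Type u} [CommRing k]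

theorem not_isUnit_of_c1_eq_zero [Nontrivial k] {y : R14Model k} (hy : y.c1 = 0) : ¬IsUnit y := by
  intro hunit
  obtain ⟨z, hz⟩ := hunit.exists_right_inv
  simpa [hy] using congrArg c1 hz

/-- The square of the maximal ideal; it also contains `v² = st + su`. -/
def quadraticIdeal : Ideal (R14Model k) :=
  Ideal.span {gen 0 * gen 1, gen 0 * gen 2, gen 1 * gen 2}

theorem mem_quadraticIdeal {y : R14Model k} (h1 : y.c1 = 0) (hs : y.cs = 0) (ht : y.ct = 0)
    (hu : y.cu = 0) (hv : y.cv = 0) : y ∈ quadraticIdeal := by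
  have hy : y = ofScalar y.cst * (gen 0 * gen 1) + ofScalar y.csu * (gen 0 * gen 2) +
      ofScalar y.ctu * (gen 1 * gen 2) := by
    ext <;> simp [gen, *]
  rw [hy]
  refine add_mem (add_mem ?_ ?_) ?_ <;> exact Ideal.mul_mem_left _ _ (Ideal.subset_span (by simp))

end Quadratic

section Exact

variable {k : Type u} [Field k] {ϑ : k}

variable (ϑ) in
def zeroDivisor : R14Model k := ⟨0, 1 - ϑ, ϑ, 1, 1, 0, 0, 0⟩

variable (ϑ) in
/-- Spans the linear part of the annihilator of `zeroDivisor ϑ`: the product of the two is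
`-3ϑ(st + su)`. -/
def partner : R14Model k := ⟨0, -(1 + ϑ), -ϑ, 1, -ϑ, 0, 0, 0⟩

theorem zeroDivisor_mul_partner (h3 : (3 : k) = 0) : zeroDivisor ϑ * partner ϑ = 0 := by
  ext <;> simp [zeroDivisor, partner] <;> linear_combination (-ϑ) * h3

theorem quadraticIdeal_le_span_zeroDivisor (h1 : ϑ ≠ 1) :
    quadraticIdeal ≤ Ideal.span {zeroDivisor ϑ} := by
  have hmem (z : R14Model k) : zeroDivisor ϑ * z ∈ Ideal.span {zeroDivisor ϑ} :=
    Ideal.mul_mem_right _ _ (Ideal.mem_span_singleton_self _)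
  have hst : gen 0 * gen 1 = zeroDivisor ϑ * (ofScalar (ϑ - 1)⁻¹ * (gen 0 - gen 3)) := by
    have : ϑ - 1 ≠ 0 := sub_ne_zero_of_ne h1
    ext <;> simp [zeroDivisor, gen]
    field_simp
    ring
  have hsu : gen 0 * gen 2 = zeroDivisor ϑ * gen 3 - gen 0 * gen 1 := by
    ext <;> simp [zeroDivisor, gen]
  have htu : gen 1 * gen 2 = zeroDivisor ϑ * gen 1 - ofScalar (1 - ϑ) * (gen 0 * gen 1) := by
    ext <;> simp [zeroDivisor, gen]
  have hst_mem : gen 0 * gen 1 ∈ Ideal.span {zeroDivisor ϑ} := hst ▸ hmem _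
  simp only [quadraticIdeal, Ideal.span_le, Set.insert_subset_iff, Set.singleton_subset_iff]
  refine ⟨hst_mem, ?_, ?_⟩
  · rw [hsu]; exact sub_mem (hmem _) hst_mem
  · rw [htu]; exact sub_mem (hmem _) (Ideal.mul_mem_left _ _ hst_mem)

theorem quadraticIdeal_le_span_partner (h0 : ϑ ≠ 0) (hm1 : 1 + ϑ ≠ 0) :
    quadraticIdeal ≤ Ideal.span {partner ϑ} := by
  have hmem (z : R14Model k) : partner ϑ * z ∈ Ideal.span {partner ϑ} :=
    Ideal.mul_mem_right _ _ (Ideal.mem_span_singleton_self _)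
  have hsu : gen 0 * gen 2 = partner ϑ * (ofScalar (1 + ϑ)⁻¹ * (gen 0 - gen 3)) := by
    ext <;> simp [partner, gen]
    field_simp
  have hst : gen 0 * gen 1 = ofScalar ϑ⁻¹ * (gen 0 * gen 2 - partner ϑ * gen 0) := by
    ext <;> simp [partner, gen]
    field_simp
  have htu : gen 1 * gen 2 = partner ϑ * gen 1 + ofScalar (1 + ϑ) * (gen 0 * gen 1) := by
    ext <;> simp [partner, gen]
  have hsu_mem : gen 0 * gen 2 ∈ Ideal.span {partner ϑ} := hsu ▸ hmem _
  have hst_mem : gen 0 * gen 1 ∈ Ideal.span {partner ϑ} := by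
    rw [hst]; exact Ideal.mul_mem_left _ _ (sub_mem hsu_mem (hmem _))
  simp only [quadraticIdeal, Ideal.span_le, Set.insert_subset_iff, Set.singleton_subset_iff]
  refine ⟨hst_mem, hsu_mem, ?_⟩
  rw [htu]; exact add_mem (hmem _) (Ideal.mul_mem_left _ _ hst_mem)

theorem mem_span_partner_of_zeroDivisor_mul_eq_zero (h3 : (3 : k) = 0) (h0 : ϑ ≠ 0)
    (h1 : ϑ ≠ 1) (hm1 : 1 + ϑ ≠ 0) {y : R14Model k} (hy : zeroDivisor ϑ * y = 0) :
    y ∈ Ideal.span {partner ϑ} := by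
  have ecu := congrArg cu hy
  have est := congrArg cst hy
  have esu := congrArg csu hy
  have etu := congrArg ctu hy
  simp [zeroDivisor] at ecu est esu etu
  have ht : y.ct = -ϑ * y.cu := by linear_combination etu
  have hs : y.cs = -(1 + ϑ) * y.cu := by
    have h : (ϑ - 1) * (y.cs + (1 + ϑ) * y.cu) = 0 := by
      linear_combination est - esu - (1 - ϑ) * etu
    linear_combination (mul_eq_zero.mp h).resolve_left (sub_ne_zero_of_ne h1)
  have hv : y.cv = -ϑ * y.cu := by linear_combination esu - hs + ϑ * y.cu * h3
  have hq : y - ofScalar y.cu * partner ϑ ∈ quadraticIdeal :=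
    mem_quadraticIdeal (by simp [partner, ecu]) (by simp [partner]; linear_combination hs)
      (by simp [partner]; linear_combination ht) (by simp [partner])
      (by simp [partner]; linear_combination hv)
  rw [← sub_add_cancel y (ofScalar y.cu * partner ϑ)]
  exact add_mem (quadraticIdeal_le_span_partner h0 hm1 hq)
    (Ideal.mul_mem_left _ _ (Ideal.mem_span_singleton_self _))

theorem mem_span_zeroDivisor_of_partner_mul_eq_zero (h3 : (3 : k) = 0) (h0 : ϑ ≠ 0)
    (h1 : ϑ ≠ 1) (hm1 : 1 + ϑ ≠ 0) {y : R14Model k} (hy : partner ϑ * y = 0) :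
    y ∈ Ideal.span {zeroDivisor ϑ} := by
  have ecu := congrArg cu hy
  have est := congrArg cst hy
  have esu := congrArg csu hy
  have etu := congrArg ctu hy
  simp [partner] at ecu est esu etu
  have ht : y.ct = ϑ * y.cu := by linear_combination etu
  have hsv : y.cs + y.cv + (1 + ϑ) * y.cu = 0 := by
    have h : ϑ * (y.cs + y.cv + (1 + ϑ) * y.cu) = 0 := by linear_combination -est - (1 + ϑ) * etu
    exact (mul_eq_zero.mp h).resolve_left h0
  have hv : y.cv = y.cu := by
    have h : (1 + ϑ) * (y.cv - y.cu) = 0 := by linear_combination hsv - esu - (1 + ϑ) * y.cu * h3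
    linear_combination (mul_eq_zero.mp h).resolve_left hm1
  have hs : y.cs = (1 - ϑ) * y.cu := by linear_combination hsv - hv - y.cu * h3
  have hq : y - ofScalar y.cu * zeroDivisor ϑ ∈ quadraticIdeal :=
    mem_quadraticIdeal (by simp [zeroDivisor, ecu]) (by simp [zeroDivisor]; linear_combination hs)
      (by simp [zeroDivisor]; linear_combination ht) (by simp [zeroDivisor])
      (by simp [zeroDivisor]; linear_combination hv)
  rw [← sub_add_cancel y (ofScalar y.cu * zeroDivisor ϑ)]
  exact add_mem (quadraticIdeal_le_span_zeroDivisor h1 hq)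
    (Ideal.mul_mem_left _ _ (Ideal.mem_span_singleton_self _))

theorem isExactZeroDivisor_zeroDivisor (h3 : (3 : k) = 0) (h0 : ϑ ≠ 0) (h1 : ϑ ≠ 1)
    (hm1 : 1 + ϑ ≠ 0) :
    IsExactZeroDivisor (R14Model k) (zeroDivisor ϑ) := by
  refine ⟨fun h ↦ by simpa [zeroDivisor] using congrArg cu h, not_isUnit_of_c1_eq_zero rfl,
    partner ϑ, ?_, ?_⟩
  · exact annIdeal_eq_span_singleton (zeroDivisor_mul_partner h3)
      fun _ ↦ mem_span_partner_of_zeroDivisor_mul_eq_zero h3 h0 h1 hm1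
  · exact annIdeal_eq_span_singleton (mul_comm (zeroDivisor ϑ) _ ▸ zeroDivisor_mul_partner h3)
      fun _ ↦ mem_span_zeroDivisor_of_partner_mul_eq_zero h3 h0 h1 hm1

end Exact
end R14Model

/-- if `k` is a field of characteristic 3 properly containing its
prime subfield `F₃` (i.e. some `ϑ ∈ k` is not in the image of `ℤ`), then
`(1 - ϑ)s + ϑt + u + v` is an exact zero divisor in
`R = k[s,t,u,v]/(s², sv, t², tv, u², uv, v² - st - su)`. -/
theorem stmt17 (k : Type u) [Field k] [CharP k 3] (ϑ : k)
    (hϑ : ϑ ∉ Set.range (Int.cast : ℤ → k)) :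
    IsExactZeroDivisor (R14 k)
      (Ideal.Quotient.mk _ ((1 - C ϑ) * X 0 + C ϑ * X 1 + X 2 + X 3)) := by
  have h3 : (3 : k) = 0 := by exact_mod_cast CharP.cast_eq_zero k 3
  have h0 : ϑ ≠ 0 := fun h ↦ hϑ ⟨0, by simp [h]⟩
  have h1 : ϑ ≠ 1 := fun h ↦ hϑ ⟨1, by simp [h]⟩
  have hm1 : 1 + ϑ ≠ 0 := fun h ↦ hϑ ⟨-1, by push_cast; linear_combination -h⟩
  refine IsExactZeroDivisor.of_ringEquiv R14Model.equiv ?_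
  have hx : R14Model.equiv (Ideal.Quotient.mk _ ((1 - C ϑ) * X 0 + C ϑ * X 1 + X 2 + X 3)) =
      R14Model.zeroDivisor ϑ := by
    ext <;> simp [R14Model.equiv, R14Model.gen, R14Model.zeroDivisor]
  rw [hx]
  exact R14Model.isExactZeroDivisor_zeroDivisor h3 h0 h1 hm1
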